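/- arXiv:1412.6438 — 4 statements merged into one kernel-verified Lean document; each statement's English description precedes it below -/
import Mathlib

section
/- Let p ∈ (1,2). There exists a constant C̃_p > 0, depending only on p, such that for all real numbers y, z not both zero: ( |z|^{p−2} z − |y|^{p−2} y ) (z − y) ≥ C̃_p |z−y|^2 / (|z| + |y|)^{2−p}. -/
private lemma phi_eq_nonneg {p s : ℝ} (hp : 1 < p) (hs : 0 ≤ s) :
    |s| ^ (p - 2) * s = s ^ (p - 1) := by
  rcases hs.lt_or_eq with h | h
  · rw [abs_of_pos h, ← Real.rpow_add_one h.ne']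
    congr 1; ring
  · rw [← h]
    simp [Real.zero_rpow (sub_ne_zero.2 hp.ne')]

private lemma phi_eq_nonpos {p s : ℝ} (hp : 1 < p) (hs : s ≤ 0) :
    |s| ^ (p - 2) * s = -((-s) ^ (p - 1)) := by
  have h := phi_eq_nonneg (s := -s) hp (neg_nonneg.2 hs)
  rw [abs_neg] at h
  linarith [h]

private lemma rpow_add_le_add_rpow' {a b q : ℝ} (ha : 0 ≤ a) (hb : 0 ≤ b) (h0 : 0 ≤ q)
    (h1 : q ≤ 1) : (a + b) ^ q ≤ a ^ q + b ^ q := by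
  lift a to NNReal using ha
  lift b to NNReal using hb
  exact_mod_cast NNReal.rpow_add_le_add_rpow a b h0 h1

private lemma aux_opp (p : ℝ) (hp1 : 1 < p) (hp2 : p < 2) {a z : ℝ} (ha : 0 ≤ a) (hz : 0 ≤ z)
    (hpos : 0 < z + a) :
    (p - 1) * (z + a) ^ 2 / (z + a) ^ (2 - p) ≤ (z ^ (p - 1) + a ^ (p - 1)) * (z + a) := by
  have h1 : (z + a) ^ (p - 1) ≤ z ^ (p - 1) + a ^ (p - 1) :=
    rpow_add_le_add_rpow' hz ha (by linarith) (by linarith)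
  have e : (z + a) ^ (2 : ℕ) / (z + a) ^ (2 - p) = (z + a) ^ (p - 1) * (z + a) := by
    rw [← Real.rpow_natCast (z + a) 2, ← Real.rpow_sub hpos, ← Real.rpow_add_one hpos.ne']
    congr 1; push_cast; ring
  rw [mul_div_assoc, e]
  have hS : 0 ≤ (z + a) ^ (p - 1) * (z + a) :=
    mul_nonneg (Real.rpow_nonneg hpos.le _) hpos.le
  calc (p - 1) * ((z + a) ^ (p - 1) * (z + a))
      ≤ 1 * ((z + a) ^ (p - 1) * (z + a)) := mul_le_mul_of_nonneg_right (by linarith) hS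
    _ = (z + a) ^ (p - 1) * (z + a) := one_mul _
    _ ≤ (z ^ (p - 1) + a ^ (p - 1)) * (z + a) := mul_le_mul_of_nonneg_right h1 hpos.le

private lemma aux_same (p : ℝ) (hp1 : 1 < p) (hp2 : p < 2) {y z : ℝ} (hy : 0 ≤ y)
    (hyz : y ≤ z) (hz : 0 < z) :
    (p - 1) * (z - y) ^ 2 / (z + y) ^ (2 - p) ≤ (z ^ (p - 1) - y ^ (p - 1)) * (z - y) := by
  have hb := rpow_one_add_le_one_add_mul_self (s := y / z - 1)
    (by have := div_nonneg hy hz.le; linarith) (by linarith : (0:ℝ) ≤ p - 1) (by linarith)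
  rw [show (1 + (y / z - 1)) = y / z by ring, Real.div_rpow hy hz.le] at hb
  have hzq : (0:ℝ) < z ^ (p - 1) := Real.rpow_pos_of_pos hz _
  have hb2 : y ^ (p - 1) ≤ (1 + (p - 1) * (y / z - 1)) * z ^ (p - 1) := by
    have h := mul_le_mul_of_nonneg_right hb hzq.le
    rwa [div_mul_cancel₀ _ hzq.ne'] at h
  have hzp2 : z ^ (p - 2) = z ^ (p - 1) / z := by
    rw [eq_div_iff hz.ne', ← Real.rpow_add_one hz.ne']
    congr 1; ring
  have key : (p - 1) * z ^ (p - 2) * (z - y) ≤ z ^ (p - 1) - y ^ (p - 1) := by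
    have e : z ^ (p - 1) - (1 + (p - 1) * (y / z - 1)) * z ^ (p - 1)
        = (p - 1) * (z ^ (p - 1) / z) * (z - y) := by
      field_simp
      ring
    rw [hzp2]
    linarith [e, hb2]
  have h2 : (z + y) ^ (p - 2) ≤ z ^ (p - 2) :=
    Real.rpow_le_rpow_of_nonpos hz (by linarith) (by linarith)
  have e2 : (z - y) ^ 2 / (z + y) ^ (2 - p) = (z - y) ^ 2 * (z + y) ^ (p - 2) := by
    rw [show p - 2 = -(2 - p) by ring, Real.rpow_neg (by linarith : (0:ℝ) ≤ z + y),
      div_eq_mul_inv]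
  rw [mul_div_assoc, e2]
  have hzy : 0 ≤ z - y := by linarith
  have key' := mul_le_mul_of_nonneg_right key hzy
  have h2' := mul_le_mul_of_nonneg_left h2
    (mul_nonneg (by linarith : (0:ℝ) ≤ p - 1) (sq_nonneg (z - y)))
  nlinarith [key', h2']

/-- For `p ∈ (1,2)` there is `C̃_p > 0` depending only on `p` such that
`(|z|^{p−2}z − |y|^{p−2}y)(z−y) ≥ C̃_p |z−y|²/(|z|+|y|)^{2−p}` for all `y, z ∈ ℝ`
not both zero. -/
theorem pLaplacian_strong_monotonicity_lt_two (p : ℝ) (hp1 : 1 < p) (hp2 : p < 2) :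
    ∃ C > (0:ℝ), ∀ y z : ℝ, ¬(y = 0 ∧ z = 0) →
      C * |z - y| ^ (2:ℝ) / (|z| + |y|) ^ (2 - p) ≤
        (|z| ^ (p - 2) * z - |y| ^ (p - 2) * y) * (z - y) := by
  refine ⟨p - 1, by linarith, ?_⟩
  intro y z h
  have habs : |z - y| ^ (2:ℝ) = (z - y) ^ 2 := by
    rw [show (2:ℝ) = ((2:ℕ):ℝ) by norm_num, Real.rpow_natCast, sq_abs]
  rw [habs]
  rcases le_total 0 y with hy | hy <;> rcases le_total 0 z with hz | hz
  · -- 0 ≤ y, 0 ≤ z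
    rw [phi_eq_nonneg hp1 hy, phi_eq_nonneg hp1 hz, abs_of_nonneg hy, abs_of_nonneg hz]
    rcases le_total y z with hyz | hzy
    · have hz' : 0 < z := by
        rcases hz.lt_or_eq with h' | h'
        · exact h'
        · exact absurd ⟨le_antisymm (h' ▸ hyz) hy, h'.symm⟩ h
      exact aux_same p hp1 hp2 hy hyz hz'
    · have hy' : 0 < y := by
        rcases hy.lt_or_eq with h' | h'
        · exact h'
        · exact absurd ⟨h'.symm, le_antisymm (h' ▸ hzy) hz⟩ h
      have key := aux_same p hp1 hp2 hz hzy hy'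
      have e1 : (p - 1) * (z - y) ^ 2 / (z + y) ^ (2 - p)
          = (p - 1) * (y - z) ^ 2 / (y + z) ^ (2 - p) := by rw [add_comm z y]; ring
      have e2 : (y ^ (p - 1) - z ^ (p - 1)) * (y - z)
          = (z ^ (p - 1) - y ^ (p - 1)) * (z - y) := by ring
      linarith [key, e1, e2]
  · -- 0 ≤ y, z ≤ 0
    rw [phi_eq_nonneg hp1 hy, phi_eq_nonpos hp1 hz, abs_of_nonneg hy, abs_of_nonpos hz]
    have hpos : 0 < y + -z := by
      rcases (by linarith : (0:ℝ) ≤ y - z).lt_or_eq with h' | h'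
      · linarith
      · exact absurd ⟨by linarith, by linarith⟩ h
    have key := aux_opp p hp1 hp2 (neg_nonneg.2 hz) hy hpos
    have e1 : (p - 1) * (z - y) ^ 2 / (-z + y) ^ (2 - p)
        = (p - 1) * (y + -z) ^ 2 / (y + -z) ^ (2 - p) := by rw [add_comm (-z) y]; ring
    have e2 : (y ^ (p - 1) + (-z) ^ (p - 1)) * (y + -z)
        = (-(-z) ^ (p - 1) - y ^ (p - 1)) * (z - y) := by ring
    linarith [key, e1, e2]
  · -- y ≤ 0, 0 ≤ z
    rw [phi_eq_nonpos hp1 hy, phi_eq_nonneg hp1 hz, abs_of_nonpos hy, abs_of_nonneg hz]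
    have hpos : 0 < z + -y := by
      rcases (by linarith : (0:ℝ) ≤ z - y).lt_or_eq with h' | h'
      · linarith
      · exact absurd ⟨by linarith, by linarith⟩ h
    have key := aux_opp p hp1 hp2 (neg_nonneg.2 hy) hz hpos
    have e1 : (p - 1) * (z - y) ^ 2 / (z + -y) ^ (2 - p)
        = (p - 1) * (z + -y) ^ 2 / (z + -y) ^ (2 - p) := by ring
    have e2 : (z ^ (p - 1) + (-y) ^ (p - 1)) * (z + -y)
        = (z ^ (p - 1) - -(-y) ^ (p - 1)) * (z - y) := by ring
    linarith [key, e1, e2]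
  · -- y ≤ 0, z ≤ 0
    rw [phi_eq_nonpos hp1 hy, phi_eq_nonpos hp1 hz, abs_of_nonpos hy, abs_of_nonpos hz]
    rcases le_total y z with hyz | hzy
    · have hy' : 0 < -y := by
        rcases (neg_nonneg.2 hy).lt_or_eq with h' | h'
        · exact h'
        · exact absurd ⟨by linarith, by linarith⟩ h
      have key := aux_same p hp1 hp2 (y := -z) (z := -y) (neg_nonneg.2 hz)
        (by linarith) hy'
      have e1 : (p - 1) * (z - y) ^ 2 / (-z + -y) ^ (2 - p)
          = (p - 1) * (-y - -z) ^ 2 / (-y + -z) ^ (2 - p) := by rw [add_comm (-z) (-y)]; ring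
      have e2 : ((-y) ^ (p - 1) - (-z) ^ (p - 1)) * (-y - -z)
          = (-(-z) ^ (p - 1) - -(-y) ^ (p - 1)) * (z - y) := by ring
      linarith [key, e1, e2]
    · have hz' : 0 < -z := by
        rcases (neg_nonneg.2 hz).lt_or_eq with h' | h'
        · exact h'
        · exact absurd ⟨by linarith, by linarith⟩ h
      have key := aux_same p hp1 hp2 (y := -y) (z := -z) (neg_nonneg.2 hy)
        (by linarith) hz'
      have e1 : (p - 1) * (z - y) ^ 2 / (-z + -y) ^ (2 - p)
          = (p - 1) * (-z - -y) ^ 2 / (-z + -y) ^ (2 - p) := by ring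
      have e2 : ((-z) ^ (p - 1) - (-y) ^ (p - 1)) * (-z - -y)
          = (-(-z) ^ (p - 1) - -(-y) ^ (p - 1)) * (z - y) := by ring
      linarith [key, e1, e2]
end

section
/- Let T>0, 1<p<∞, 1/p<α<1, p<q<∞, and let f:[0,T]×ℝ→ℝ be Carathéodory satisfying (f1) with exponent q and (f3). Then there exist ρ > 0 and β > 0 such that for every g ∈ L^p(0,T) with ‖g‖_{L^p(0,T)} = ρ, setting u(t) = (1/Γ(α)) ∫_0^t (t−s)^{α−1} g(s) ds, the energy satisfies (1/p) ∫_0^T |g(t)|^p dt − ∫_0^T F(t,u(t)) dt ≥ β. -/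
open MeasureTheory Set Filter
open scoped ENNReal Topology

/-- The primitive `F(t,ξ) = ∫_0^ξ f(t,s) ds`. -/
noncomputable def Fprim (f : ℝ → ℝ → ℝ) (t ξ : ℝ) : ℝ := ∫ s in (0:ℝ)..ξ, f t s

/-- `f` is a Carathéodory function on `[0,T] × ℝ`: measurable in `t` for each `ξ`,
continuous in `ξ` for a.e. `t ∈ [0,T]`. -/
def IsCaratheodory (T : ℝ) (f : ℝ → ℝ → ℝ) : Prop :=
  (∀ ξ : ℝ, Measurable fun t => f t ξ) ∧
  (∀ᵐ t ∂(volume.restrict (Icc 0 T)), Continuous fun ξ => f t ξ)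

/-- Condition (f1): `|f(t,ξ)| ≤ C (1 + |ξ|^{q-1})` for some `C > 0`. -/
def CondF1 (T q : ℝ) (f : ℝ → ℝ → ℝ) : Prop :=
  ∃ C > (0:ℝ), ∀ᵐ t ∂(volume.restrict (Icc 0 T)), ∀ ξ : ℝ,
    |f t ξ| ≤ C * (1 + |ξ| ^ (q - 1))

/-- Condition (f2) (Ambrosetti–Rabinowitz): `0 < μ F(t,ξ) ≤ ξ f(t,ξ)` for `|ξ| ≥ r`. -/
def CondF2 (T μ r : ℝ) (f : ℝ → ℝ → ℝ) : Prop :=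
  ∀ᵐ t ∂(volume.restrict (Icc 0 T)), ∀ ξ : ℝ, r ≤ |ξ| →
    0 < μ * Fprim f t ξ ∧ μ * Fprim f t ξ ≤ ξ * f t ξ

/-- Condition (f3): `f(t,ξ)/|ξ|^{p-1} → 0` as `ξ → 0`, uniformly in a.e. `t ∈ [0,T]`. -/
def CondF3 (T p : ℝ) (f : ℝ → ℝ → ℝ) : Prop :=
  ∀ ε > (0:ℝ), ∃ δ > (0:ℝ), ∀ᵐ t ∂(volume.restrict (Icc 0 T)), ∀ ξ : ℝ,
    ξ ≠ 0 → |ξ| < δ → |f t ξ| ≤ ε * |ξ| ^ (p - 1)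

/-- The left Riemann–Liouville fractional integral `(_0I_t^α g)(t)` (with base point `0`). -/
noncomputable def RLI (α : ℝ) (g : ℝ → ℝ) (t : ℝ) : ℝ :=
  (1 / Real.Gamma α) * ∫ s in (0:ℝ)..t, (t - s) ^ (α - 1) * g s

lemma aux_abs_intervalIntegral_le {h ψ : ℝ → ℝ} (hc : Continuous h) (ξ : ℝ)
    (hψint : IntegrableOn ψ (Ioc 0 |ξ|))
    (hbound : ∀ s : ℝ, s ≠ 0 → |s| ≤ |ξ| → |h s| ≤ ψ |s|) :
    |∫ s in (0:ℝ)..ξ, h s| ≤ ∫ s in Ioc (0:ℝ) |ξ|, ψ s := by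
  rcases le_or_gt 0 ξ with hξ | hξ
  · have habs : |ξ| = ξ := abs_of_nonneg hξ
    rw [habs] at hψint ⊢
    calc |∫ s in (0:ℝ)..ξ, h s| ≤ ∫ s in (0:ℝ)..ξ, |h s| :=
          intervalIntegral.abs_integral_le_integral_abs hξ
      _ = ∫ s in Ioc (0:ℝ) ξ, |h s| := intervalIntegral.integral_of_le hξ
      _ ≤ ∫ s in Ioc (0:ℝ) ξ, ψ s := by
          refine setIntegral_mono_on (hc.abs.integrableOn_Ioc) hψint measurableSet_Ioc ?_
          intro s hs
          have h1 : s ≠ 0 := ne_of_gt hs.1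
          have h2 := hbound s h1 (by rw [abs_of_pos hs.1, habs]; exact hs.2)
          rwa [abs_of_pos hs.1] at h2
  · have hξ' : (0:ℝ) ≤ -ξ := by linarith
    have habs : |ξ| = -ξ := abs_of_neg hξ
    rw [habs] at hψint ⊢
    rw [intervalIntegral.integral_symm, abs_neg]
    calc |∫ s in ξ..(0:ℝ), h s| ≤ ∫ s in ξ..(0:ℝ), |h s| :=
          intervalIntegral.abs_integral_le_integral_abs (le_of_lt hξ)
      _ = ∫ s in (0:ℝ)..(-ξ), |h (-s)| := by
          rw [intervalIntegral.integral_comp_neg (fun x => |h x|)]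
          norm_num
      _ = ∫ s in Ioc (0:ℝ) (-ξ), |h (-s)| := intervalIntegral.integral_of_le hξ'
      _ ≤ ∫ s in Ioc (0:ℝ) (-ξ), ψ s := by
          refine setIntegral_mono_on ((hc.comp continuous_neg).abs.integrableOn_Ioc) hψint
            measurableSet_Ioc ?_
          intro s hs
          have h1 : (-s) ≠ 0 := by simpa using ne_of_gt hs.1
          have h2 : |(-s)| ≤ |ξ| := by rw [abs_neg, abs_of_pos hs.1, habs]; exact hs.2
          have h3 := hbound (-s) h1 h2
          rwa [abs_neg, abs_of_pos hs.1] at h3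

lemma aux_Fprim_bound {f : ℝ → ℝ → ℝ} {t C q p ε δ : ℝ} (hp : 1 < p) (hq : p < q) (hC : 0 < C)
    (hδ : 0 < δ) (hε : 0 ≤ ε)
    (hcont : Continuous (f t))
    (hb1 : ∀ ξ : ℝ, |f t ξ| ≤ C * (1 + |ξ| ^ (q-1)))
    (hb3 : ∀ ξ : ℝ, ξ ≠ 0 → |ξ| < δ → |f t ξ| ≤ ε * |ξ| ^ (p-1))
    (ξ : ℝ) :
    |Fprim f t ξ| ≤ ε/p * |ξ|^p + (C * (δ^(1-q) + 1)) * |ξ|^q := by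
  have hp0 : (0:ℝ) < p := by linarith
  have hq0 : (0:ℝ) < q := by linarith
  have haξ : (0:ℝ) ≤ |ξ| := abs_nonneg ξ
  have hDq : 0 ≤ (C * (δ^(1-q) + 1)) * |ξ|^q := by
    have h1 : (0:ℝ) < δ^(1-q) := Real.rpow_pos_of_pos hδ _
    have h2 : (0:ℝ) ≤ |ξ|^q := Real.rpow_nonneg haξ _
    positivity
  by_cases hcase : |ξ| < δ
  · -- small case
    have hint : IntegrableOn (fun s : ℝ => ε * s^(p-1)) (Ioc 0 |ξ|) :=
      (intervalIntegrable_iff_integrableOn_Ioc_of_le haξ).mp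
        ((intervalIntegral.intervalIntegrable_rpow' (by linarith : (-1:ℝ) < p-1)).const_mul ε)
    have key := aux_abs_intervalIntegral_le hcont ξ hint
      (fun s hs hsle => by
        have : |s| < δ := lt_of_le_of_lt hsle hcase
        exact hb3 s hs this)
    have hval : ∫ s in Ioc (0:ℝ) |ξ|, ε * s^(p-1) = ε * (|ξ|^p / p) := by
      rw [← intervalIntegral.integral_of_le haξ, intervalIntegral.integral_const_mul,
        integral_rpow (Or.inl (by linarith : (-1:ℝ) < p-1))]
      rw [Real.zero_rpow (by linarith : p - 1 + 1 ≠ 0)]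
      ring_nf
    rw [hval] at key
    calc |Fprim f t ξ| ≤ ε * (|ξ|^p / p) := key
      _ = ε/p * |ξ|^p := by ring
      _ ≤ ε/p * |ξ|^p + (C * (δ^(1-q) + 1)) * |ξ|^q := by linarith
  · -- large case
    push_neg at hcase
    have hξpos : 0 < |ξ| := lt_of_lt_of_le hδ hcase
    have hint : IntegrableOn (fun s : ℝ => C * (1 + s^(q-1))) (Ioc 0 |ξ|) :=
      (intervalIntegrable_iff_integrableOn_Ioc_of_le haξ).mp
        (((intervalIntegrable_const).add
          (intervalIntegral.intervalIntegrable_rpow' (by linarith : (-1:ℝ) < q-1))).const_mul C)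
    have key := aux_abs_intervalIntegral_le hcont ξ hint (fun s _ _ => hb1 s)
    have hval : ∫ s in Ioc (0:ℝ) |ξ|, C * (1 + s^(q-1)) = C * (|ξ| + |ξ|^q / q) := by
      rw [← intervalIntegral.integral_of_le haξ, intervalIntegral.integral_const_mul,
        intervalIntegral.integral_add intervalIntegrable_const
          (intervalIntegral.intervalIntegrable_rpow' (by linarith : (-1:ℝ) < q-1)),
        intervalIntegral.integral_const,
        integral_rpow (Or.inl (by linarith : (-1:ℝ) < q-1)),
        Real.zero_rpow (by linarith : q - 1 + 1 ≠ 0)]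
      simp only [smul_eq_mul]
      ring_nf
    rw [hval] at key
    have h1 : |ξ|^(1-q) ≤ δ^(1-q) :=
      Real.rpow_le_rpow_of_nonpos hδ hcase (by linarith)
    have h2 : |ξ| = |ξ|^(1-q) * |ξ|^q := by
      rw [← Real.rpow_add hξpos]; norm_num
    have h3 : |ξ| ≤ δ^(1-q) * |ξ|^q := by
      conv_lhs => rw [h2]
      exact mul_le_mul_of_nonneg_right h1 (Real.rpow_nonneg haξ _)
    have h4 : |ξ|^q / q ≤ |ξ|^q := by
      have := Real.rpow_nonneg haξ q
      rw [div_le_iff₀ hq0]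
      nlinarith
    have h5 : 0 ≤ ε/p * |ξ|^p := by
      have := Real.rpow_nonneg haξ p
      positivity
    calc |Fprim f t ξ| ≤ C * (|ξ| + |ξ|^q / q) := key
      _ ≤ C * (δ^(1-q) * |ξ|^q + |ξ|^q) := by nlinarith
      _ = (C * (δ^(1-q) + 1)) * |ξ|^q := by ring
      _ ≤ ε/p * |ξ|^p + (C * (δ^(1-q) + 1)) * |ξ|^q := by linarith

lemma aux_RLI_bound {T p α : ℝ} (hT : 0 < T) (hp : 1 < p) (hpα : 1/p < α) (hα : α < 1)
    {g : ℝ → ℝ} (hg : MemLp g (ENNReal.ofReal p) (volume.restrict (Ioc 0 T)))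
    {t : ℝ} (ht : t ∈ Ioc (0:ℝ) T) :
    |RLI α g t| ≤ (1 / Real.Gamma α) *
        (T ^ ((α-1)*(p/(p-1))+1) / ((α-1)*(p/(p-1))+1)) ^ (1/(p/(p-1))) *
      (∫ s in Ioc (0:ℝ) T, |g s| ^ p) ^ (1/p) := by
  have hp0 : (0:ℝ) < p := by linarith
  have hp1 : (0:ℝ) < p - 1 := by linarith
  set p' : ℝ := p/(p-1) with hp'def
  have hconj : p.HolderConjugate p' := (Real.holderConjugate_iff_eq_conjExponent hp).2 hp'def
  have hp'0 : (0:ℝ) < p' := hconj.symm.pos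
  set r : ℝ := (α-1)*p' with hrdef
  set γ : ℝ := r + 1 with hγdef
  have hαp : 1 < α * p := by
    rw [div_lt_iff₀ hp0] at hpα; linarith
  have hγeq : γ = (α*p - 1)/(p-1) := by
    rw [hγdef, hrdef, hp'def]; field_simp; ring
  have hγ : 0 < γ := by rw [hγeq]; apply div_pos <;> linarith
  have hr : -1 < r := by rw [hγdef] at hγ; linarith
  have hα0 : 0 < α := lt_trans (by positivity) hpα
  have hΓ : 0 < Real.Gamma α := Real.Gamma_pos_of_pos hα0
  obtain ⟨ht0, htT⟩ := ht
  set μ : Measure ℝ := volume.restrict (Ioc 0 t) with hμdef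
  -- g restricted
  have hgres : MemLp g (ENNReal.ofReal p) μ := by
    have h1 := hg.restrict (Ioc 0 t)
    rwa [Measure.restrict_restrict measurableSet_Ioc,
      inter_eq_left.mpr (Ioc_subset_Ioc_right htT)] at h1
  set φ : ℝ → ℝ := fun s => (t - s) ^ (α - 1) with hφdef
  have hφmeas : Measurable φ := by
    apply Measurable.pow <;> fun_prop
  have hφint : IntegrableOn (fun s : ℝ => (t - s) ^ r) (Ioc 0 t) := by
    have h1 : IntervalIntegrable (fun x : ℝ => x ^ r) volume 0 t :=
      intervalIntegral.intervalIntegrable_rpow' hr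
    have h2 := (h1.comp_sub_left t).symm
    simp only [sub_zero, sub_self] at h2
    exact (intervalIntegrable_iff_integrableOn_Ioc_of_le ht0.le).mp h2
  have heq : ∀ s ∈ Ioc (0:ℝ) t, (t - s) ^ r = ‖φ s‖ ^ p' := by
    intro s hs
    have h1 : (0:ℝ) ≤ t - s := by linarith [hs.2]
    rw [hφdef]
    rw [Real.norm_eq_abs, abs_of_nonneg (Real.rpow_nonneg h1 _), hrdef,
      Real.rpow_mul h1]
  have hint2 : IntegrableOn (fun s => ‖φ s‖ ^ p') (Ioc 0 t) :=
    hφint.congr_fun heq measurableSet_Ioc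
  have hφmem : MemLp φ (ENNReal.ofReal p') μ := by
    have hmeas : AEStronglyMeasurable φ μ := hφmeas.aestronglyMeasurable
    have hne0 : ENNReal.ofReal p' ≠ 0 := by simp [ENNReal.ofReal_eq_zero, not_le, hp'0]
    have hnetop : ENNReal.ofReal p' ≠ ∞ := ENNReal.ofReal_ne_top
    have h1 : MemLp (fun s => ‖φ s‖ ^ (ENNReal.ofReal p').toReal) 1 μ := by
      rw [memLp_one_iff_integrable, ENNReal.toReal_ofReal hp'0.le]
      exact hint2
    have h2 := (memLp_norm_rpow_iff (p := ENNReal.ofReal p') hmeas hne0 hnetop).mp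
    rw [ENNReal.div_self hne0 hnetop] at h2
    exact h2 h1
  have habsg : MemLp (fun s => |g s|) (ENNReal.ofReal p) μ := by
    simpa [Real.norm_eq_abs] using hgres.norm
  have hφnn : 0 ≤ᵐ[μ] φ := by
    rw [hμdef]
    refine (ae_restrict_iff' measurableSet_Ioc).mpr (ae_of_all _ fun s hs => ?_)
    exact Real.rpow_nonneg (by linarith [hs.2]) _
  have hH := integral_mul_le_Lp_mul_Lq_of_nonneg hconj.symm hφnn
    (ae_of_all μ fun s => abs_nonneg (g s)) hφmem habsg
  -- compute ∫ φ^p'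
  have hφpow : ∫ s, φ s ^ p' ∂μ = t^γ/γ := by
    have e1 : ∫ s, φ s ^ p' ∂μ = ∫ s in Ioc (0:ℝ) t, (t - s) ^ r := by
      rw [hμdef]
      refine setIntegral_congr_fun measurableSet_Ioc fun s hs => ?_
      rw [heq s hs, Real.norm_eq_abs]
      congr 1
      exact (abs_of_nonneg (Real.rpow_nonneg (by linarith [hs.2] : (0:ℝ) ≤ t - s) _)).symm
    rw [e1, ← intervalIntegral.integral_of_le ht0.le]
    have e2 := intervalIntegral.integral_comp_sub_left (a := 0) (b := t) (fun x : ℝ => x ^ r) t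
    simp only [sub_zero, sub_self] at e2
    rw [e2, integral_rpow (Or.inl hr), Real.zero_rpow (by linarith : r + 1 ≠ 0)]
    rw [hγdef]; ring
  -- compare to T
  have hintnn : (0:ℝ) ≤ ∫ s, φ s ^ p' ∂μ := by
    rw [hφpow]; positivity
  have hstep1 : (∫ s, φ s ^ p' ∂μ) ^ (1/p') ≤ (T^γ/γ) ^ (1/p') := by
    apply Real.rpow_le_rpow hintnn _ (by positivity)
    rw [hφpow]
    gcongr
  -- second factor
  have hgint : Integrable (fun s => |g s| ^ p) (volume.restrict (Ioc 0 T)) := by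
    have h1 := hg.integrable_norm_rpow (by simp [ENNReal.ofReal_eq_zero, not_le, hp0])
      ENNReal.ofReal_ne_top
    simpa [ENNReal.toReal_ofReal hp0.le, Real.norm_eq_abs] using h1
  have hgnn : (0:ℝ) ≤ ∫ s, |g s| ^ p ∂μ :=
    integral_nonneg fun s => Real.rpow_nonneg (abs_nonneg _) _
  have hstep2 : (∫ s, |g s| ^ p ∂μ) ^ (1/p) ≤ (∫ s in Ioc (0:ℝ) T, |g s| ^ p) ^ (1/p) := by
    apply Real.rpow_le_rpow hgnn _ (by positivity)
    rw [hμdef]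
    apply setIntegral_mono_set hgint
    · exact ae_of_all _ fun s => Real.rpow_nonneg (abs_nonneg _) _
    · exact HasSubset.Subset.eventuallyLE (Ioc_subset_Ioc_right htT)
  -- assemble
  have habsRLI : |RLI α g t| ≤ (1 / Real.Gamma α) * ∫ s, φ s * |g s| ∂μ := by
    rw [RLI, abs_mul, abs_of_nonneg (by positivity : (0:ℝ) ≤ 1 / Real.Gamma α)]
    apply mul_le_mul_of_nonneg_left _ (by positivity)
    calc |∫ s in (0:ℝ)..t, (t - s) ^ (α - 1) * g s|
        ≤ ∫ s in (0:ℝ)..t, |(t - s) ^ (α - 1) * g s| :=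
          intervalIntegral.abs_integral_le_integral_abs ht0.le
      _ = ∫ s in Ioc (0:ℝ) t, |(t - s) ^ (α - 1) * g s| :=
          intervalIntegral.integral_of_le ht0.le
      _ = ∫ s, φ s * |g s| ∂μ := by
          rw [hμdef]
          refine setIntegral_congr_fun measurableSet_Ioc fun s hs => ?_
          rw [abs_mul, hφdef]
          congr 1
          exact abs_of_nonneg (Real.rpow_nonneg (by linarith [hs.2]) _)
  calc |RLI α g t| ≤ (1 / Real.Gamma α) * ∫ s, φ s * |g s| ∂μ := habsRLI
    _ ≤ (1 / Real.Gamma α) *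
        ((∫ s, φ s ^ p' ∂μ) ^ (1/p') * (∫ s, |g s| ^ p ∂μ) ^ (1/p)) :=
        mul_le_mul_of_nonneg_left hH (by positivity)
    _ ≤ (1 / Real.Gamma α) * ((T^γ/γ) ^ (1/p') * (∫ s in Ioc (0:ℝ) T, |g s| ^ p) ^ (1/p)) := by
        apply mul_le_mul_of_nonneg_left _ (by positivity)
        apply mul_le_mul hstep1 hstep2 (by positivity) (by positivity)
    _ = (1 / Real.Gamma α) * (T ^ ((α-1)*(p/(p-1))+1) / ((α-1)*(p/(p-1))+1)) ^ (1/(p/(p-1))) *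
      (∫ s in Ioc (0:ℝ) T, |g s| ^ p) ^ (1/p) := by
        rw [hγdef, hrdef, hp'def]; ring

/-- Mountain-pass geometry near zero: under (f1) and (f3) there are `ρ > 0` and `β > 0`
such that every `g ∈ L^p(0,T)` with `‖g‖_{L^p} = ρ` (i.e. every `u = _0I^α g` in
`E_0^{α,p}` with `‖u‖_{α,p} = ρ`) satisfies
`(1/p)∫_0^T |g|^p − ∫_0^T F(t,u(t)) dt ≥ β`. -/
theorem energy_mountain_pass_geometry
    (T p q α : ℝ) (hT : 0 < T) (hp : 1 < p) (hpα : 1 / p < α) (hα : α < 1) (hq : p < q)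
    (f : ℝ → ℝ → ℝ) (hcar : IsCaratheodory T f)
    (hf1 : CondF1 T q f) (hf3 : CondF3 T p f) :
    ∃ ρ > (0:ℝ), ∃ β > (0:ℝ), ∀ g : ℝ → ℝ,
      MemLp g (ENNReal.ofReal p) (volume.restrict (Ioc 0 T)) →
      (∫ t in Ioc (0:ℝ) T, |g t| ^ p) ^ (1/p) = ρ →
      β ≤ (1/p) * (∫ t in Ioc (0:ℝ) T, |g t| ^ p) -
            ∫ t in Ioc (0:ℝ) T, Fprim f t (RLI α g t) := by
  obtain ⟨C, hC, hf1'⟩ := hf1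
  have hp0 : (0:ℝ) < p := by linarith
  have hp1 : (0:ℝ) < p - 1 := by linarith
  have hq0 : (0:ℝ) < q := by linarith
  have hqp : (0:ℝ) < q - p := by linarith
  set p' : ℝ := p/(p-1) with hp'def
  set γ : ℝ := (α-1)*p'+1 with hγdef
  have hα0 : 0 < α := lt_trans (by positivity) hpα
  have hΓ : 0 < Real.Gamma α := Real.Gamma_pos_of_pos hα0
  have hp'0 : 0 < p' := by rw [hp'def]; positivity
  have hαp : 1 < α * p := by rw [div_lt_iff₀ hp0] at hpα; linarith
  have hγeq : γ = (α*p - 1)/(p-1) := by rw [hγdef, hp'def]; field_simp; ring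
  have hγpos : 0 < γ := by rw [hγeq]; apply div_pos <;> linarith
  set K : ℝ := (1/Real.Gamma α) * (T^γ/γ)^(1/p') with hKdef
  have hK : 0 < K := by
    rw [hKdef]
    have h1 : (0:ℝ) < T^γ := Real.rpow_pos_of_pos hT _
    positivity
  set ε : ℝ := 1/(2*T*K^p) with hεdef
  have hKp : (0:ℝ) < K^p := Real.rpow_pos_of_pos hK _
  have hKq : (0:ℝ) < K^q := Real.rpow_pos_of_pos hK _
  have hε : 0 < ε := by rw [hεdef]; positivity
  obtain ⟨δ, hδ, hf3'⟩ := hf3 ε hε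
  set D : ℝ := C * (δ^(1-q)+1) with hDdef
  have hD : 0 < D := by
    rw [hDdef]
    have h1 : (0:ℝ) < δ^(1-q) := Real.rpow_pos_of_pos hδ _
    positivity
  set A : ℝ := T*D*K^q with hAdef
  have hA : 0 < A := by rw [hAdef]; positivity
  set ρ : ℝ := (1/(4*p*A))^(1/(q-p)) with hρdef
  have hρ : 0 < ρ := Real.rpow_pos_of_pos (by positivity) _
  have hρpow : ρ^(q-p) = 1/(4*p*A) := by
    rw [hρdef, ← Real.rpow_mul (by positivity), one_div (q-p), inv_mul_cancel₀ hqp.ne',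
      Real.rpow_one]
  have hρp : (0:ℝ) < ρ^p := Real.rpow_pos_of_pos hρ _
  refine ⟨ρ, hρ, (1/(4*p))*ρ^p, by positivity, ?_⟩
  intro g hg hnorm
  have hIint_nn : 0 ≤ ∫ t in Ioc (0:ℝ) T, |g t|^p :=
    integral_nonneg fun t => Real.rpow_nonneg (abs_nonneg _) _
  have hIeq : ∫ t in Ioc (0:ℝ) T, |g t|^p = ρ^p := by
    rw [← hnorm, ← Real.rpow_mul hIint_nn, one_div p, inv_mul_cancel₀ hp0.ne', Real.rpow_one]
  -- sup bound
  have hsup : ∀ t ∈ Ioc (0:ℝ) T, |RLI α g t| ≤ K * ρ := by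
    intro t ht
    have h1 := aux_RLI_bound hT hp hpα hα hg ht
    rw [hnorm] at h1
    calc |RLI α g t| ≤ (1 / Real.Gamma α) *
        (T ^ ((α-1)*(p/(p-1))+1) / ((α-1)*(p/(p-1))+1)) ^ (1/(p/(p-1))) * ρ := h1
      _ = K * ρ := by rw [hKdef, hγdef, hp'def]
  set M : ℝ := ε/p * (K*ρ)^p + D * (K*ρ)^q with hMdef
  have hae : ∀ᵐ t ∂(volume.restrict (Ioc 0 T)), Fprim f t (RLI α g t) ≤ M := by
    have h1 : ∀ᵐ t ∂(volume.restrict (Ioc 0 T)), Continuous (f t) :=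
      ae_restrict_of_ae_restrict_of_subset Ioc_subset_Icc_self hcar.2
    have h2 := ae_restrict_of_ae_restrict_of_subset Ioc_subset_Icc_self hf1'
    have h3 := ae_restrict_of_ae_restrict_of_subset Ioc_subset_Icc_self hf3'
    have h4 : ∀ᵐ t ∂(volume.restrict (Ioc 0 T)), t ∈ Ioc (0:ℝ) T :=
      ae_restrict_mem measurableSet_Ioc
    filter_upwards [h1, h2, h3, h4] with t hc hb1 hb3 htmem
    have hb := aux_Fprim_bound hp hq hC hδ hε.le hc hb1 hb3 (RLI α g t)
    have habs : |RLI α g t| ≤ K * ρ := hsup t htmem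
    have hKρ : (0:ℝ) ≤ K * ρ := by positivity
    have e1 : |RLI α g t|^p ≤ (K*ρ)^p := Real.rpow_le_rpow (abs_nonneg _) habs hp0.le
    have e2 : |RLI α g t|^q ≤ (K*ρ)^q := Real.rpow_le_rpow (abs_nonneg _) habs hq0.le
    calc Fprim f t (RLI α g t) ≤ |Fprim f t (RLI α g t)| := le_abs_self _
      _ ≤ ε/p * |RLI α g t|^p + D * |RLI α g t|^q := by rw [hDdef]; exact hb
      _ ≤ M := by
          rw [hMdef]
          have := hε.le
          gcongr
  -- numeric facts
  have eKp : (K*ρ)^p = K^p * ρ^p := Real.mul_rpow hK.le hρ.le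
  have eKq : (K*ρ)^q = K^q * ρ^q := Real.mul_rpow hK.le hρ.le
  have eρq : ρ^q = ρ^(q-p) * ρ^p := by rw [← Real.rpow_add hρ]; ring_nf
  have hMT : M * T = 1/(2*p) * ρ^p + 1/(4*p) * ρ^p := by
    have c1 : ε * (T * K^p) = 1/2 := by
      rw [hεdef]; field_simp
    have c2 : T*D*K^q*ρ^(q-p) = 1/(4*p) := by
      rw [hρpow, hAdef]
      have h1 : T*D*K^q ≠ 0 := by positivity
      field_simp
    rw [hMdef, eKp, eKq, eρq]
    linear_combination (ρ^p/p) * c1 + ρ^p * c2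
  have hsplit : (1:ℝ)/p * ρ^p - (1/(2*p) * ρ^p + 1/(4*p) * ρ^p) = 1/(4*p)*ρ^p := by
    field_simp; ring
  clear_value p' γ K ε D A ρ M
  rw [hIeq]
  by_cases hInt : Integrable (fun t => Fprim f t (RLI α g t)) (volume.restrict (Ioc 0 T))
  · have hle : ∫ t in Ioc (0:ℝ) T, Fprim f t (RLI α g t) ≤ M * T := by
      have hconst : IntegrableOn (fun _ : ℝ => M) (Ioc 0 T) volume := by
        exact integrableOn_const (by rw [Real.volume_Ioc]; exact ENNReal.ofReal_ne_top)
      calc ∫ t in Ioc (0:ℝ) T, Fprim f t (RLI α g t) ≤ ∫ _t in Ioc (0:ℝ) T, M :=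
            integral_mono_ae hInt hconst hae
        _ = M * T := by
            rw [setIntegral_const, Real.volume_real_Ioc_of_le hT.le, smul_eq_mul]
            ring
    linarith only [hle, hMT, hsplit]
  · rw [integral_undef hInt]
    have h1 : (1:ℝ)/p - 1/(4*p) = 3/(4*p) := by field_simp; ring
    have h2 : 0 ≤ ((1:ℝ)/p - 1/(4*p)) * ρ^p := by rw [h1]; positivity
    have h3 : ((1:ℝ)/p - 1/(4*p)) * ρ^p = 1/p*ρ^p - 1/(4*p)*ρ^p := by ring
    linarith only [h2, h3]
end

section
/- Let T>0, 1<p<∞, 1/p<α<1, and let f:[0,T]×ℝ→ℝ be Carathéodory satisfying (f1) with some exponent 1<q<∞ and (f2) with some μ>p and r>0. Let u_0 : [0,T] → ℝ be a smooth function with compact support contained in (0,T) which is not identically zero, and set (_0D_t^α u_0)(t) = (1/Γ(1−α)) ∫_0^t (t−s)^{−α} u_0'(s) ds. Then the energy along the ray through u_0 tends to −∞: (σ^p/p) ∫_0^T |(_0D_t^α u_0)(t)|^p dt − ∫_0^T F(t, σ u_0(t)) dt → −∞ as σ → +∞. In particular there exists e = σ u_0 with arbitrarily large norm and negative energy. 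-/
open MeasureTheory Set Filter
open scoped ENNReal Topology

lemma hasDerivAt_prim {g : ℝ → ℝ} (hg : Continuous g) (ξ : ℝ) :
    HasDerivAt (fun x => ∫ s in (0:ℝ)..x, g s) (g ξ) ξ :=
  intervalIntegral.integral_hasDerivAt_right (hg.intervalIntegrable _ _)
    hg.stronglyMeasurable.stronglyMeasurableAtFilter hg.continuousAt

lemma prim_abs_le {g : ℝ → ℝ} {C b ξ : ℝ} (hb : 0 ≤ b) (hξ : |ξ| ≤ b)
    (hC : 0 ≤ C) (h1 : ∀ x, |x| ≤ b → |g x| ≤ C) :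
    |∫ s in (0:ℝ)..ξ, g s| ≤ C * b := by
  have h := intervalIntegral.norm_integral_le_of_norm_le_const (C := C) (f := g)
    (a := 0) (b := ξ) ?_
  · have h' : |∫ s in (0:ℝ)..ξ, g s| ≤ C * |ξ| := by simpa using h
    exact h'.trans (mul_le_mul_of_nonneg_left hξ hC)
  · intro x hx
    rw [uIoc_eq_union] at hx
    have hxb : |x| ≤ b := by
      rcases hx with hx | hx
      · rw [abs_le]; constructor
        · nlinarith [hx.1, abs_nonneg ξ, le_abs_self ξ, neg_abs_le ξ]
        · exact hx.2.trans (le_trans (le_abs_self ξ) hξ)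
      · rw [abs_le]; constructor
        · exact le_trans (by linarith [neg_abs_le ξ, hξ] : -b ≤ ξ) hx.1.le
        · linarith [hx.2]
    simpa using h1 x hxb

/-- monotonicity of `σ ↦ G(σξ₀)σ^{-μ}` on `[1,∞)` under the AR condition. -/
lemma prim_ray_mono {g : ℝ → ℝ} {μ r ξ₀ : ℝ} (hg : Continuous g) (hμ : 0 < μ) (hr : 0 < r)
    (hξ₀ : |ξ₀| = r)
    (h2 : ∀ ξ, r ≤ |ξ| → 0 < μ * ∫ s in (0:ℝ)..ξ, g s ∧
      μ * (∫ s in (0:ℝ)..ξ, g s) ≤ ξ * g ξ) :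
    MonotoneOn (fun σ => (∫ s in (0:ℝ)..(σ * ξ₀), g s) * σ ^ (-μ)) (Ici 1) := by
  set G : ℝ → ℝ := fun x => ∫ s in (0:ℝ)..x, g s with hG
  have hd : ∀ σ : ℝ, 0 < σ → HasDerivAt (fun σ => G (σ * ξ₀) * σ ^ (-μ))
      (g (σ * ξ₀) * ξ₀ * σ ^ (-μ) + G (σ * ξ₀) * (-μ * σ ^ (-μ - 1))) σ := by
    intro σ hσ
    have h1 : HasDerivAt (fun σ : ℝ => G (σ * ξ₀)) (g (σ * ξ₀) * ξ₀) σ := by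
      have := (hasDerivAt_prim hg (σ * ξ₀)).comp σ (hasDerivAt_mul_const ξ₀); exact this
    have h2' : HasDerivAt (fun σ : ℝ => σ ^ (-μ)) (-μ * σ ^ (-μ - 1)) σ := by
      simpa using Real.hasDerivAt_rpow_const (p := -μ) (Or.inl hσ.ne')
    exact h1.mul h2'
  apply monotoneOn_of_deriv_nonneg (convex_Ici 1)
  · intro σ hσ
    exact ((hd σ (lt_of_lt_of_le one_pos hσ)).continuousAt).continuousWithinAt
  · intro σ hσ
    rw [interior_Ici] at hσ
    exact ((hd σ (lt_trans one_pos hσ)).differentiableAt).differentiableWithinAt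
  · intro σ hσ
    rw [interior_Ici] at hσ
    have hσ0 : (0:ℝ) < σ := lt_trans one_pos hσ
    rw [(hd σ hσ0).deriv]
    have hmem : r ≤ |σ * ξ₀| := by
      rw [abs_mul, hξ₀, abs_of_pos hσ0]
      have h1σ : (1:ℝ) < σ := hσ
      nlinarith
    obtain ⟨-, hAR⟩ := h2 (σ * ξ₀) hmem
    have hpow : σ ^ (-μ) = σ ^ (-μ - 1) * σ := by
      rw [← Real.rpow_add_one hσ0.ne']; ring_nf
    have hpos : (0:ℝ) < σ ^ (-μ - 1) := Real.rpow_pos_of_pos hσ0 _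
    have : g (σ * ξ₀) * ξ₀ * σ ^ (-μ) + G (σ * ξ₀) * (-μ * σ ^ (-μ - 1))
        = σ ^ (-μ - 1) * ((σ * ξ₀) * g (σ * ξ₀) - μ * G (σ * ξ₀)) := by
      rw [hpow]; ring
    rw [this]
    have : (0:ℝ) ≤ (σ * ξ₀) * g (σ * ξ₀) - μ * G (σ * ξ₀) := by
      have := hAR; simp only [hG]; linarith
    positivity

/-- Main pointwise lemma: global lower bound `G ξ ≥ (m/r^μ)|ξ|^μ - 2K₀`. -/
lemma prim_lower {g : ℝ → ℝ} {C q μ r : ℝ} (hg : Continuous g)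
    (hC : 0 < C) (hq : 1 < q) (hμ : 0 < μ) (hr : 0 < r)
    (h1 : ∀ ξ, |g ξ| ≤ C * (1 + |ξ| ^ (q - 1)))
    (h2 : ∀ ξ, r ≤ |ξ| → 0 < μ * ∫ s in (0:ℝ)..ξ, g s ∧
      μ * (∫ s in (0:ℝ)..ξ, g s) ≤ ξ * g ξ) :
    (0 < min (∫ s in (0:ℝ)..r, g s) (∫ s in (0:ℝ)..(-r), g s) ∧
      min (∫ s in (0:ℝ)..r, g s) (∫ s in (0:ℝ)..(-r), g s) ≤ C * (1 + r ^ (q - 1)) * r) ∧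
    ∀ ξ, min (∫ s in (0:ℝ)..r, g s) (∫ s in (0:ℝ)..(-r), g s) / r ^ μ * |ξ| ^ μ
      - 2 * (C * (1 + r ^ (q - 1)) * r) ≤ ∫ s in (0:ℝ)..ξ, g s := by
  set G : ℝ → ℝ := fun x => ∫ s in (0:ℝ)..x, g s with hGdef
  set m : ℝ := min (G r) (G (-r)) with hm
  set K : ℝ := C * (1 + r ^ (q - 1)) * r with hK
  have hK0 : 0 < K := by
    have : (0:ℝ) ≤ r ^ (q - 1) := Real.rpow_nonneg hr.le _
    positivity
  -- bound |G ξ| ≤ K for |ξ| ≤ r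
  have hGb : ∀ ξ, |ξ| ≤ r → |G ξ| ≤ K := by
    intro ξ hξ
    refine prim_abs_le hr.le hξ (by positivity) ?_
    intro x hx
    refine (h1 x).trans ?_
    have : |x| ^ (q - 1) ≤ r ^ (q - 1) :=
      Real.rpow_le_rpow (abs_nonneg x) hx (by linarith)
    nlinarith
  -- positivity of m
  have hmpos : 0 < m := by
    have hp1 := (h2 r (by rw [abs_of_pos hr])).1
    have hp2 := (h2 (-r) (by rw [abs_neg, abs_of_pos hr])).1
    have hg1 : 0 < G r := by by_contra h; push_neg at h; nlinarith
    have hg2 : 0 < G (-r) := by by_contra h; push_neg at h; nlinarith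
    exact lt_min hg1 hg2
  have hmK : m ≤ K := le_trans (min_le_left _ _)
    (le_trans (le_abs_self _) (hGb r (by rw [abs_of_pos hr])))
  refine ⟨⟨hmpos, hmK⟩, ?_⟩
  intro ξ
  have hrpow_pos : (0:ℝ) < r ^ μ := Real.rpow_pos_of_pos hr _
  by_cases hcase : r ≤ |ξ|
  · -- large case
    set ξ₀ : ℝ := if 0 ≤ ξ then r else -r with hξ₀def
    have hξ₀abs : |ξ₀| = r := by
      rw [hξ₀def]; split <;> simp [abs_of_pos hr, abs_neg]
    have hmono := prim_ray_mono hg hμ hr hξ₀abs h2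
    have hσ1 : (1:ℝ) ≤ |ξ| / r := (one_le_div hr).mpr hcase
    have hσmem : |ξ| / r ∈ Ici (1:ℝ) := hσ1
    have hval : (|ξ| / r) * ξ₀ = ξ := by
      rw [hξ₀def]; split_ifs with h
      · rw [abs_of_nonneg h, div_mul_cancel₀ _ hr.ne']
      · push_neg at h; rw [abs_of_neg h]; field_simp
    have hle := hmono (self_mem_Ici) hσmem hσ1
    simp only [one_mul, hval] at hle
    rw [Real.one_rpow] at hle
    -- hle : G ξ₀ * 1 ≤ G ξ * (|ξ|/r) ^ (-μ)
    have hbpos : (0:ℝ) < (|ξ| / r) ^ μ := Real.rpow_pos_of_pos (by positivity) _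
    have hneg : (|ξ| / r) ^ (-μ) = ((|ξ| / r) ^ μ)⁻¹ := Real.rpow_neg (by positivity) _
    have hkey : G ξ₀ * (|ξ| / r) ^ μ ≤ G ξ := by
      rw [hneg] at hle
      calc G ξ₀ * (|ξ| / r) ^ μ ≤ (G ξ * ((|ξ| / r) ^ μ)⁻¹) * (|ξ| / r) ^ μ := by
            apply mul_le_mul_of_nonneg_right _ hbpos.le
            simpa using hle
        _ = G ξ := by field_simp
    have hdiv : (|ξ| / r) ^ μ = |ξ| ^ μ / r ^ μ := Real.div_rpow (abs_nonneg ξ) hr.le μ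
    have hmle : m ≤ G ξ₀ := by
      rw [hξ₀def]; split_ifs
      · exact min_le_left _ _
      · exact min_le_right _ _
    have : m / r ^ μ * |ξ| ^ μ ≤ G ξ := by
      calc m / r ^ μ * |ξ| ^ μ = m * (|ξ| / r) ^ μ := by rw [hdiv]; ring
        _ ≤ G ξ₀ * (|ξ| / r) ^ μ := mul_le_mul_of_nonneg_right hmle hbpos.le
        _ ≤ G ξ := hkey
    linarith
  · -- small case
    push_neg at hcase
    have h1' : -K ≤ G ξ := by
      have := hGb ξ hcase.le
      have := abs_le.mp this
      linarith [this.1]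
    have h2' : m / r ^ μ * |ξ| ^ μ ≤ K := by
      have hpow : |ξ| ^ μ ≤ r ^ μ :=
        Real.rpow_le_rpow (abs_nonneg ξ) hcase.le hμ.le
      have : m / r ^ μ * |ξ| ^ μ ≤ m / r ^ μ * r ^ μ := by
        apply mul_le_mul_of_nonneg_left hpow (by positivity)
      calc m / r ^ μ * |ξ| ^ μ ≤ m / r ^ μ * r ^ μ := this
        _ = m := by field_simp
        _ ≤ K := hmK
    linarith

set_option maxHeartbeats 1000000 in
/-- Under (f1) and (f2), the energy along the ray through a fixed nonzero smooth function
`u₀` compactly supported in `(0,T)` tends to `−∞`: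
`(σ^p/p)∫_0^T |_0D^α u₀|^p − ∫_0^T F(t, σu₀(t)) dt → −∞` as `σ → +∞`. In particular there
is `e = σu₀` with arbitrarily large norm and negative energy. -/
theorem energy_unbounded_below_along_ray
    (T p q α μ r : ℝ) (hT : 0 < T) (hp : 1 < p) (hpα : 1 / p < α) (hα : α < 1)
    (hq1 : 1 < q) (hμ : p < μ) (hr : 0 < r)
    (f : ℝ → ℝ → ℝ) (hcar : IsCaratheodory T f)
    (hf1 : CondF1 T q f) (hf2 : CondF2 T μ r f)
    (u₀ : ℝ → ℝ) (hu₀ : ContDiff ℝ (⊤ : ℕ∞) u₀) (hsupp : tsupport u₀ ⊆ Ioo 0 T)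
    (hne : u₀ ≠ 0) :
    Filter.Tendsto
      (fun σ : ℝ =>
        σ ^ p / p *
            (∫ t in Ioc (0:ℝ) T,
              |(1 / Real.Gamma (1 - α)) * ∫ s in (0:ℝ)..t, (t - s) ^ (-α) * deriv u₀ s| ^ p) -
          ∫ t in Ioc (0:ℝ) T, Fprim f t (σ * u₀ t))
      Filter.atTop Filter.atBot := by
  classical
  obtain ⟨C, hC, hf1ae⟩ := hf1
  -- combine the a.e. hypotheses
  have hae : ∀ᵐ t ∂(volume.restrict (Icc 0 T)),
      (Continuous fun ξ => f t ξ) ∧ (∀ ξ : ℝ, |f t ξ| ≤ C * (1 + |ξ| ^ (q - 1))) ∧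
      (∀ ξ : ℝ, r ≤ |ξ| → 0 < μ * Fprim f t ξ ∧ μ * Fprim f t ξ ≤ ξ * f t ξ) :=
    hcar.2.and (hf1ae.and hf2)
  obtain ⟨N, hNsub, hNmeas, hN0⟩ := exists_measurable_superset_of_null (ae_iff.mp hae)
  have hgood : ∀ t ∉ N,
      (Continuous fun ξ => f t ξ) ∧ (∀ ξ : ℝ, |f t ξ| ≤ C * (1 + |ξ| ^ (q - 1))) ∧
      (∀ ξ : ℝ, r ≤ |ξ| → 0 < μ * Fprim f t ξ ∧ μ * Fprim f t ξ ≤ ξ * f t ξ) := by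
    intro t ht
    by_contra h
    exact ht (hNsub h)
  -- the modified function, Caratheodory everywhere
  set ft : ℝ → ℝ → ℝ := fun t ξ => if t ∈ N then 0 else f t ξ with hftdef
  have hft_cont : ∀ t, Continuous fun ξ => ft t ξ := by
    intro t
    by_cases ht : t ∈ N
    · simp only [hftdef, if_pos ht]; exact continuous_const
    · simp only [hftdef, if_neg ht]; exact (hgood t ht).1
  have hft_meas : ∀ ξ, Measurable fun t => ft t ξ := fun ξ =>
    Measurable.ite hNmeas measurable_const (hcar.1 ξ)
  have hjoint : Measurable fun p : ℝ × ℝ => ft p.1 p.2 :=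
    (measurable_uncurry_of_continuous_of_measurable (u := fun ξ t => ft t ξ)
      hft_cont hft_meas).comp measurable_swap
  have hFmeas : ∀ ξ, Measurable fun t => Fprim ft t ξ := by
    intro ξ
    have h1 : Measurable fun t => ∫ s in Ioc (0:ℝ) ξ, ft t s :=
      (MeasureTheory.StronglyMeasurable.integral_prod_right
        (ν := volume.restrict (Ioc (0:ℝ) ξ)) (f := ft) hjoint.stronglyMeasurable).measurable
    have h2 : Measurable fun t => ∫ s in Ioc ξ (0:ℝ), ft t s :=
      (MeasureTheory.StronglyMeasurable.integral_prod_right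
        (ν := volume.restrict (Ioc ξ (0:ℝ))) (f := ft) hjoint.stronglyMeasurable).measurable
    have h3 : Measurable fun t => (∫ s in Ioc (0:ℝ) ξ, ft t s) - ∫ s in Ioc ξ (0:ℝ), ft t s :=
      h1.sub h2
    simpa [Fprim, intervalIntegral] using h3
  have hFcont : ∀ t, Continuous fun ξ => Fprim ft t ξ := by
    intro t
    exact continuous_iff_continuousAt.mpr fun ξ =>
      ((hasDerivAt_prim (hft_cont t) ξ).differentiableAt).continuousAt
  have hFjoint : Measurable fun p : ℝ × ℝ => Fprim ft p.1 p.2 := by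
    have h := measurable_uncurry_of_continuous_of_measurable (u := fun ξ t => Fprim ft t ξ)
      hFcont hFmeas
    have h2 := h.comp measurable_swap
    exact h2
  -- basic positivity facts
  have hμ0 : (0:ℝ) < μ := lt_trans (lt_trans one_pos hp) hμ
  set K : ℝ := C * (1 + r ^ (q - 1)) * r with hKdef
  have hK0 : 0 < K := by
    have : (0:ℝ) ≤ r ^ (q - 1) := Real.rpow_nonneg hr.le _
    positivity
  have hrpow_pos : (0:ℝ) < r ^ μ := Real.rpow_pos_of_pos hr _
  set cfun : ℝ → ℝ := fun t => min (Fprim ft t r) (Fprim ft t (-r)) / r ^ μ with hcdef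
  have hcfun_meas : Measurable cfun := ((hFmeas r).min (hFmeas (-r))).div_const _
  -- bound on u₀
  have hcs : HasCompactSupport u₀ :=
    IsCompact.of_isClosed_subset isCompact_Icc (isClosed_tsupport u₀)
      (hsupp.trans Ioo_subset_Icc_self)
  obtain ⟨M₀, hM₀'⟩ := hcs.exists_bound_of_continuous hu₀.continuous
  have hM₀0 : 0 ≤ M₀ := le_trans (norm_nonneg (u₀ 0)) (hM₀' 0)
  have hM₀ : ∀ x, |u₀ x| ≤ M₀ := fun x => by simpa using hM₀' x
  -- a.e. on Ioc, t is good
  haveI hfin : IsFiniteMeasure (volume.restrict (Ioc (0:ℝ) T)) := by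
    constructor
    rw [Measure.restrict_apply_univ]
    exact measure_Ioc_lt_top
  have hN0' : (volume.restrict (Ioc (0:ℝ) T)) N = 0 := by
    rw [Measure.restrict_apply hNmeas]
    refine measure_mono_null (inter_subset_inter_right _ Ioc_subset_Icc_self) ?_
    rw [← Measure.restrict_apply hNmeas]
    exact hN0
  have hgoodae : ∀ᵐ t ∂(volume.restrict (Ioc (0:ℝ) T)), t ∉ N := by
    rw [ae_iff]
    simpa using hN0'
  -- the key a.e. properties
  have hmain : ∀ᵐ t ∂(volume.restrict (Ioc (0:ℝ) T)),
      (0 < cfun t ∧ cfun t ≤ K / r ^ μ) ∧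
      (∀ ξ : ℝ, cfun t * |ξ| ^ μ - 2 * K ≤ Fprim f t ξ) ∧
      (∀ b : ℝ, 0 ≤ b → ∀ ξ : ℝ, |ξ| ≤ b →
        |Fprim f t ξ| ≤ C * (1 + b ^ (q - 1)) * b) := by
    filter_upwards [hgoodae] with t ht
    obtain ⟨hc1, hc2, hc3⟩ := hgood t ht
    have hfteq : ∀ ξ : ℝ, Fprim ft t ξ = Fprim f t ξ := by
      intro ξ
      exact intervalIntegral.integral_congr fun s _ => if_neg ht
    have hPL := prim_lower (g := f t) hc1 hC hq1 hμ0 hr hc2 hc3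
    have hcval : cfun t = min (Fprim f t r) (Fprim f t (-r)) / r ^ μ := by
      rw [hcdef]; simp only [hfteq]
    constructor
    · constructor
      · rw [hcval]
        exact div_pos hPL.1.1 hrpow_pos
      · rw [hcval]
        gcongr
        exact hPL.1.2
    constructor
    · intro ξ
      have := hPL.2 ξ
      rw [hcval]
      exact this
    · intro b hb ξ hξ
      refine prim_abs_le hb hξ (by positivity) ?_
      intro x hx
      refine (hc2 x).trans ?_
      have : |x| ^ (q - 1) ≤ b ^ (q - 1) :=
        Real.rpow_le_rpow (abs_nonneg x) hx (by linarith)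
      nlinarith [Real.rpow_nonneg hb (q-1)]
  -- integrability of cfun * |u₀|^μ and definition of B
  have habsμ_cont : Continuous fun t => |u₀ t| ^ μ :=
    (hu₀.continuous.abs).rpow_const fun x => Or.inr hμ0.le
  have hintc : Integrable (fun t => cfun t * |u₀ t| ^ μ) (volume.restrict (Ioc (0:ℝ) T)) := by
    refine Integrable.mono' (integrable_const ((K / r ^ μ) * M₀ ^ μ))
      ((hcfun_meas.mul habsμ_cont.measurable).aestronglyMeasurable) ?_
    filter_upwards [hmain] with t ht
    have h1 : |cfun t| ≤ K / r ^ μ := by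
      rw [abs_of_pos ht.1.1]; exact ht.1.2
    have h2 : |u₀ t| ^ μ ≤ M₀ ^ μ := Real.rpow_le_rpow (abs_nonneg _) (hM₀ t) hμ0.le
    have h3 : (0:ℝ) ≤ |u₀ t| ^ μ := Real.rpow_nonneg (abs_nonneg _) _
    rw [Real.norm_eq_abs, abs_mul, abs_of_nonneg h3]
    have hKr : (0:ℝ) ≤ K / r ^ μ := le_of_lt (div_pos hK0 hrpow_pos)
    exact mul_le_mul h1 h2 h3 hKr
  set B : ℝ := ∫ t in Ioc (0:ℝ) T, cfun t * |u₀ t| ^ μ with hBdef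
  have hBnn : ∀ᵐ t ∂(volume.restrict (Ioc (0:ℝ) T)), 0 ≤ cfun t * |u₀ t| ^ μ := by
    filter_upwards [hmain] with t ht
    exact mul_nonneg ht.1.1.le (Real.rpow_nonneg (abs_nonneg _) _)
  have hBpos : 0 < B := by
    rcases lt_or_eq_of_le (integral_nonneg_of_ae hBnn) with h | h
    · exact h
    exfalso
    have hz : (fun t => cfun t * |u₀ t| ^ μ) =ᵐ[volume.restrict (Ioc (0:ℝ) T)] 0 :=
      (integral_eq_zero_iff_of_nonneg_ae hBnn hintc).mp h.symm
    have hu0 : ∀ᵐ t ∂(volume.restrict (Ioc (0:ℝ) T)), u₀ t = 0 := by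
      filter_upwards [hz, hmain] with t htz htm
      by_contra hne'
      have h1 : 0 < |u₀ t| ^ μ := Real.rpow_pos_of_pos (abs_pos.mpr hne') _
      have : 0 < cfun t * |u₀ t| ^ μ := mul_pos htm.1.1 h1
      rw [Pi.zero_apply] at htz
      linarith [htz ▸ this]
    -- contradiction with u₀ ≠ 0
    obtain ⟨t₀, ht₀⟩ : ∃ t₀, u₀ t₀ ≠ 0 := by
      by_contra h'
      push_neg at h'
      exact hne (funext h')
    have ht₀mem : t₀ ∈ Ioo (0:ℝ) T := hsupp (subset_tsupport u₀ ht₀)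
    have hopen : IsOpen ((u₀ ⁻¹' {0}ᶜ) ∩ Ioo 0 T) :=
      (isOpen_compl_singleton.preimage hu₀.continuous).inter isOpen_Ioo
    obtain ⟨ε, hε, hball⟩ := Metric.isOpen_iff.mp hopen t₀ ⟨ht₀, ht₀mem⟩
    rw [Real.ball_eq_Ioo] at hball
    have hnull : volume ({t | u₀ t ≠ 0} ∩ Ioc 0 T) = 0 := by
      have := ae_iff.mp hu0
      rwa [Measure.restrict_apply' measurableSet_Ioc] at this
    have hsub2 : Ioo (t₀ - ε) (t₀ + ε) ⊆ {t | u₀ t ≠ 0} ∩ Ioc 0 T := by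
      intro x hx
      obtain ⟨hx1, hx2⟩ := hball hx
      exact ⟨hx1, Ioo_subset_Ioc_self hx2⟩
    have : volume (Ioo (t₀ - ε) (t₀ + ε)) = 0 :=
      measure_mono_null hsub2 hnull
    rw [Real.volume_Ioo] at this
    have h2ε : (0:ℝ) < t₀ + ε - (t₀ - ε) := by linarith
    simp [ENNReal.ofReal_eq_zero, not_le.mpr h2ε] at this
    linarith
  -- the measure of Ioc 0 T
  have hTvol : (volume (Ioc (0:ℝ) T)).toReal = T := by
    rw [Real.volume_Ioc, ENNReal.toReal_ofReal (by linarith)]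
    ring
  -- lower bound on the nonlinearity integral, for σ ≥ 1
  have hlower : ∀ σ : ℝ, 1 ≤ σ →
      σ ^ μ * B - 2 * K * T ≤ ∫ t in Ioc (0:ℝ) T, Fprim f t (σ * u₀ t) := by
    intro σ hσ
    have hσ0 : (0:ℝ) < σ := lt_of_lt_of_le one_pos hσ
    have hFint : Integrable (fun t => Fprim f t (σ * u₀ t))
        (volume.restrict (Ioc (0:ℝ) T)) := by
      have hmeasF : Measurable fun t => Fprim ft t (σ * u₀ t) := by
        have hpm : Measurable fun t : ℝ => (t, σ * u₀ t) :=
          measurable_id.prodMk ((continuous_const.mul hu₀.continuous).measurable)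
        have h := hFjoint.comp hpm
        exact h
      have haesm : AEStronglyMeasurable (fun t => Fprim f t (σ * u₀ t))
          (volume.restrict (Ioc (0:ℝ) T)) := by
        refine hmeasF.aestronglyMeasurable.congr ?_
        filter_upwards [hgoodae] with t ht
        exact intervalIntegral.integral_congr fun s _ => if_neg ht
      refine Integrable.mono' (integrable_const (C * (1 + (σ * M₀) ^ (q - 1)) * (σ * M₀)))
        haesm ?_
      filter_upwards [hmain] with t ht
      rw [Real.norm_eq_abs]
      refine ht.2.2 (σ * M₀) (by positivity) (σ * u₀ t) ?_
      rw [abs_mul, abs_of_pos hσ0]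
      exact mul_le_mul_of_nonneg_left (hM₀ t) hσ0.le
    have hlowint : Integrable (fun t => σ ^ μ * (cfun t * |u₀ t| ^ μ) - 2 * K)
        (volume.restrict (Ioc (0:ℝ) T)) := (hintc.const_mul _).sub (integrable_const _)
    have hle : ∀ᵐ t ∂(volume.restrict (Ioc (0:ℝ) T)),
        σ ^ μ * (cfun t * |u₀ t| ^ μ) - 2 * K ≤ Fprim f t (σ * u₀ t) := by
      filter_upwards [hmain] with t ht
      have h1 := ht.2.1 (σ * u₀ t)
      have h2 : |σ * u₀ t| ^ μ = σ ^ μ * |u₀ t| ^ μ := by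
        rw [abs_mul, abs_of_pos hσ0, Real.mul_rpow hσ0.le (abs_nonneg _)]
      rw [h2] at h1
      calc σ ^ μ * (cfun t * |u₀ t| ^ μ) - 2 * K
          = cfun t * (σ ^ μ * |u₀ t| ^ μ) - 2 * K := by ring
        _ ≤ Fprim f t (σ * u₀ t) := h1
    have := integral_mono_ae hlowint hFint hle
    calc σ ^ μ * B - 2 * K * T
        = ∫ t in Ioc (0:ℝ) T, (σ ^ μ * (cfun t * |u₀ t| ^ μ) - 2 * K) := by
          rw [integral_sub (hintc.const_mul _) (integrable_const _),
            integral_const_mul, setIntegral_const, smul_eq_mul, measureReal_def, hTvol, hBdef]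
          ring
      _ ≤ _ := this
  -- conclusion via comparison with an explicit function tending to -∞
  set A : ℝ := ∫ t in Ioc (0:ℝ) T,
    |(1 / Real.Gamma (1 - α)) * ∫ s in (0:ℝ)..t, (t - s) ^ (-α) * deriv u₀ s| ^ p with hAdef
  have hup : Tendsto (fun σ : ℝ => σ ^ μ * (σ ^ (p - μ) * (A / p) - B) + 2 * K * T)
      atTop atBot := by
    have h1 : Tendsto (fun σ : ℝ => σ ^ μ) atTop atTop := tendsto_rpow_atTop hμ0
    have h2 : Tendsto (fun σ : ℝ => σ ^ (p - μ) * (A / p) - B) atTop (𝓝 (0 * (A / p) - B)) := by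
      refine Tendsto.sub_const ?_ B
      refine Tendsto.mul_const _ ?_
      have := tendsto_rpow_neg_atTop (y := μ - p) (by linarith)
      simpa [neg_sub] using this
    have hC' : 0 * (A / p) - B < 0 := by simpa using hBpos
    have := Filter.Tendsto.atTop_mul_neg hC' h1 h2
    exact tendsto_atBot_add_const_right _ _ this
  refine tendsto_atBot_mono' atTop ?_ hup
  filter_upwards [eventually_ge_atTop (1:ℝ)] with σ hσ
  have hσ0 : (0:ℝ) < σ := lt_of_lt_of_le one_pos hσ
  have hpow : σ ^ μ * σ ^ (p - μ) = σ ^ p := by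
    rw [← Real.rpow_add hσ0]; ring_nf
  have h1 := hlower σ hσ
  have h2 : σ ^ p / p * A = σ ^ μ * (σ ^ (p - μ) * (A / p)) := by
    rw [← mul_assoc, hpow]
    field_simp
  calc σ ^ p / p * A - ∫ t in Ioc (0:ℝ) T, Fprim f t (σ * u₀ t)
      ≤ σ ^ p / p * A - (σ ^ μ * B - 2 * K * T) := by linarith
    _ = σ ^ μ * (σ ^ (p - μ) * (A / p) - B) + 2 * K * T := by
        rw [h2]; ring
end

section
/- Let T>0, 1<p<∞, 1/p<α<1, 1<q<∞, M>0, and let f:[0,T]×ℝ→ℝ be Carathéodory satisfying (f1) with exponent q and (f2) with some μ>p and r>0. Then there exists K > 0 such that: for every g ∈ L^p(0,T), setting u(t) = (1/Γ(α)) ∫_0^t (t−s)^{α−1} g(s) ds, if (1/p) ‖g‖_{L^p}^p − ∫_0^T F(t,u(t)) dt ≤ M and | ‖g‖_{L^p}^p − ∫_0^T f(t,u(t)) u(t) dt | ≤ M ‖g‖_{L^p}, then ‖g‖_{L^p(0,T)} ≤ K. That is, every Palais–Smale sequence for the energy functional I is bounded in the fractional derivative norm. -/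
open MeasureTheory Set Filter
open scoped ENNReal Topology

/-- Scalar lemma: if `c x^p ≤ E + M x` with `p > 1`, then `x` is bounded by a constant
depending only on `c, E, M, p`. -/
private lemma key_bound {p c E M x : ℝ} (hp : 1 < p) (hc : 0 < c) (hE : 0 < E)
    (hM : 0 ≤ M) (hx : 0 ≤ x) (h : c * x ^ p ≤ E + M * x) :
    x ≤ max 1 (((E + M) / c) ^ (1 / (p - 1))) := by
  rcases le_or_gt x 1 with hx1 | hx1
  · exact le_max_of_le_left hx1
  · have hx0 : 0 < x := one_pos.trans hx1
    have hp1 : 0 < p - 1 := by linarith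
    have hxp : x ^ p = x ^ (p - 1) * x := by
      rw [← Real.rpow_add_one hx0.ne' (p - 1)]; ring_nf
    have h2 : (c * x ^ (p - 1)) * x ≤ (E + M) * x := by
      have hEx : E ≤ E * x := le_mul_of_one_le_right hE.le hx1.le
      calc (c * x ^ (p-1)) * x = c * x ^ p := by rw [hxp]; ring
        _ ≤ E + M * x := h
        _ ≤ E * x + M * x := by linarith
        _ = (E + M) * x := by ring
    have h3 : x ^ (p - 1) ≤ (E + M) / c := by
      rw [le_div_iff₀ hc]
      have := le_of_mul_le_mul_right h2 hx0
      linarith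
    have h4 : x ≤ ((E + M) / c) ^ (1 / (p - 1)) := by
      have := Real.rpow_le_rpow (Real.rpow_nonneg hx0.le _) h3
        (by positivity : (0:ℝ) ≤ 1 / (p - 1))
      rwa [← Real.rpow_mul hx0.le, mul_one_div, div_self hp1.ne', Real.rpow_one] at this
    exact le_max_of_le_right h4

set_option maxHeartbeats 1000000

/-- Boundedness of Palais–Smale sequences: under (f1) and (f2) there is `K > 0` such that
for every `g ∈ L^p(0,T)` with `u = _0I^α g`, if
`(1/p)‖g‖_{L^p}^p − ∫_0^T F(t,u) ≤ M` and
`| ‖g‖_{L^p}^p − ∫_0^T f(t,u)u | ≤ M ‖g‖_{L^p}`, then `‖g‖_{L^p(0,T)} ≤ K`. -/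
theorem palais_smale_bounded
    (T p q α μ r M : ℝ) (hT : 0 < T) (hp : 1 < p) (hpα : 1 / p < α) (hα : α < 1)
    (hq1 : 1 < q) (hμ : p < μ) (hr : 0 < r) (hM : 0 < M)
    (f : ℝ → ℝ → ℝ) (hcar : IsCaratheodory T f)
    (hf1 : CondF1 T q f) (hf2 : CondF2 T μ r f) :
    ∃ K > (0:ℝ), ∀ g : ℝ → ℝ,
      MemLp g (ENNReal.ofReal p) (volume.restrict (Ioc 0 T)) →
      (1/p) * (∫ t in Ioc (0:ℝ) T, |g t| ^ p) -
          (∫ t in Ioc (0:ℝ) T, Fprim f t (RLI α g t)) ≤ M →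
      |(∫ t in Ioc (0:ℝ) T, |g t| ^ p) -
          ∫ t in Ioc (0:ℝ) T, f t (RLI α g t) * RLI α g t| ≤
        M * (∫ t in Ioc (0:ℝ) T, |g t| ^ p) ^ (1/p) →
      (∫ t in Ioc (0:ℝ) T, |g t| ^ p) ^ (1/p) ≤ K := by
  classical
  obtain ⟨C, hC, hf1ae⟩ := hf1
  have hp0 : (0:ℝ) < p := lt_trans one_pos hp
  have hμ0 : (0:ℝ) < μ := lt_trans hp0 hμ
  have hμ1 : (1:ℝ) < μ := lt_trans hp hμ
  -- constants
  set D₁ : ℝ := C * (1 + r ^ (q - 1)) * r with hD₁def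
  have hD₁ : 0 < D₁ := by
    have : (0:ℝ) < 1 + r ^ (q - 1) := by positivity
    positivity
  set D : ℝ := (μ + 1) * D₁ with hDdef
  have hD : 0 < D := by positivity
  set c : ℝ := 1 / p - 1 / μ with hcdef
  have hc : 0 < c := by
    have : 1 / μ < 1 / p := one_div_lt_one_div_of_lt hp0 hμ
    simp only [hcdef]; linarith
  set c₀ : ℝ := min (min c (1 / p)) 1 with hc₀def
  have hc₀ : 0 < c₀ := by
    have hp' : (0:ℝ) < 1 / p := by positivity
    simp only [hc₀def, lt_min_iff]
    exact ⟨⟨hc, hp'⟩, one_pos⟩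
  set E : ℝ := M + D * T / μ with hEdef
  have hME : M < E := by
    have : 0 < D * T / μ := by positivity
    simp only [hEdef]; linarith
  have hE : 0 < E := lt_trans hM hME
  refine ⟨max 1 (((E + M) / c₀) ^ (1 / (p - 1))), lt_of_lt_of_le one_pos (le_max_left _ _), ?_⟩
  intro g _hg hI hI'
  set IF : ℝ := ∫ t in Ioc (0:ℝ) T, Fprim f t (RLI α g t) with hIFdef
  set IU : ℝ := ∫ t in Ioc (0:ℝ) T, f t (RLI α g t) * RLI α g t with hIUdef
  set N : ℝ := ∫ t in Ioc (0:ℝ) T, |g t| ^ p with hNdef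
  have hN : 0 ≤ N := by
    rw [hNdef]
    exact integral_nonneg fun t => Real.rpow_nonneg (abs_nonneg _) p
  set x : ℝ := N ^ (1 / p) with hxdef
  have hx0 : 0 ≤ x := Real.rpow_nonneg hN _
  have hxpN : x ^ p = N := by
    rw [hxdef, ← Real.rpow_mul hN, one_div_mul_cancel hp0.ne', Real.rpow_one]
  have hMx : 0 ≤ M * x := mul_nonneg hM.le hx0
  suffices hkey : c₀ * x ^ p ≤ E + M * x by
    exact key_bound hp hc₀ hE hM.le hx0 hkey
  rw [hxpN]
  by_cases h1 : Integrable (fun t => Fprim f t (RLI α g t)) (volume.restrict (Ioc 0 T))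
  · by_cases h2 : Integrable (fun t => f t (RLI α g t) * RLI α g t)
        (volume.restrict (Ioc 0 T))
    · -- the main case: both integrals exist
      -- pointwise Ambrosetti–Rabinowitz type estimate
      have hIcc : ∀ᵐ t ∂(volume.restrict (Icc (0:ℝ) T)), ∀ ξ : ℝ,
          μ * Fprim f t ξ ≤ ξ * f t ξ + D := by
        filter_upwards [hf1ae, hf2] with t hb har
        intro ξ
        rcases le_or_gt r |ξ| with hξ | hξ
        · have := (har ξ hξ).2
          linarith
        · -- small `ξ`: both sides are bounded by `D₁`
          have hbound : ∀ s ∈ Set.uIoc (0:ℝ) ξ, ‖f t s‖ ≤ C * (1 + r ^ (q - 1)) := by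
            intro s hs
            have hsξ : |s| ≤ |ξ| := by
              rcases Set.mem_uIoc.mp hs with ⟨h1', h2'⟩ | ⟨h1', h2'⟩ <;>
                rw [abs_le] <;>
                constructor <;>
                linarith [neg_abs_le ξ, le_abs_self ξ, abs_nonneg ξ]
            have hsr : |s| ≤ r := le_trans hsξ hξ.le
            have hpow : |s| ^ (q - 1) ≤ r ^ (q - 1) :=
              Real.rpow_le_rpow (abs_nonneg s) hsr (by linarith)
            have := hb s
            rw [Real.norm_eq_abs]
            nlinarith
          have hF : |Fprim f t ξ| ≤ D₁ := by
            have h' := intervalIntegral.norm_integral_le_of_norm_le_const hbound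
            rw [Real.norm_eq_abs] at h'
            have h'' : C * (1 + r ^ (q - 1)) * |ξ - 0| ≤ D₁ := by
              rw [sub_zero, hD₁def]
              have hCpos : (0:ℝ) ≤ C * (1 + r ^ (q - 1)) := by positivity
              nlinarith [abs_nonneg ξ]
            exact le_trans h' h''
          have hfξ : |ξ * f t ξ| ≤ D₁ := by
            rw [abs_mul]
            have hfb := hb ξ
            have hpow : |ξ| ^ (q - 1) ≤ r ^ (q - 1) :=
              Real.rpow_le_rpow (abs_nonneg ξ) hξ.le (by linarith)
            have h1' : |f t ξ| ≤ C * (1 + r ^ (q - 1)) := by nlinarith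
            have h2' := abs_nonneg (f t ξ)
            rw [hD₁def]
            nlinarith [abs_nonneg ξ]
          obtain ⟨hF1, hF2⟩ := abs_le.mp hF
          obtain ⟨hg1, hg2⟩ := abs_le.mp hfξ
          rw [hDdef]
          nlinarith
      have hae : ∀ᵐ t ∂(volume.restrict (Ioc (0:ℝ) T)),
          μ * Fprim f t (RLI α g t) ≤ f t (RLI α g t) * RLI α g t + D := by
        filter_upwards [ae_restrict_of_ae_restrict_of_subset Ioc_subset_Icc_self hIcc] with t ht
        have h3 := ht (RLI α g t)
        have h4 : RLI α g t * f t (RLI α g t) = f t (RLI α g t) * RLI α g t := mul_comm _ _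
        linarith
      -- comparison of integrals
      have hcomp : μ * IF ≤ IU + D * T := by
        have hmono := integral_mono_ae (h1.const_mul μ)
          (h2.add (integrable_const D)) hae
        simp only [Pi.add_apply] at hmono
        rw [integral_const_mul] at hmono
        rw [integral_add h2 (integrable_const D)] at hmono
        have hconst : (∫ _t in Ioc (0:ℝ) T, D) = D * T := by
          simp [Real.volume_Ioc, ENNReal.toReal_ofReal hT.le, mul_comm, hT.le]
        rw [hconst, ← hIFdef, ← hIUdef] at hmono
        exact hmono
      -- extract the bounds from the hypotheses
      have hfu : IU ≤ N + M * x := by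
        have := (abs_le.mp hI').1
        linarith
      have hF' : μ * IF ≤ N + M * x + D * T := by linarith
      have hImul : μ * ((1/p) * N - IF) ≤ μ * M :=
        mul_le_mul_of_nonneg_left hI hμ0.le
      have hexp : μ * ((1/p) * N - IF) = (μ / p) * N - μ * IF := by ring
      -- combine: (μ/p) N ≤ μ M + N + M x + D T
      have hstep : (μ / p) * N ≤ μ * M + (N + M * x + D * T) := by
        rw [hexp] at hImul; linarith
      -- deduce the goal, multiplied by μ
      have hc₀c : c₀ ≤ c := le_trans (min_le_left _ _) (min_le_left _ _)
      have hgoal : μ * (c₀ * N) ≤ μ * (E + M * x) := by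
        have h6 : c₀ * μ ≤ (1 / p - 1 / μ) * μ := by
          rw [hcdef] at hc₀c
          exact mul_le_mul_of_nonneg_right hc₀c hμ0.le
        have h7 : (1 / p - 1 / μ) * μ = μ / p - 1 := by field_simp
        have h8 : (c₀ * μ) * N ≤ (μ / p - 1) * N :=
          mul_le_mul_of_nonneg_right (by linarith) hN
        have h9 : μ * (c₀ * N) = (c₀ * μ) * N := by ring
        have h10 : (μ / p - 1) * N = (μ / p) * N - N := by ring
        have h11 : M * x ≤ μ * (M * x) := le_mul_of_one_le_left hMx hμ1.le
        have h12 : μ * E = μ * M + D * T := by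
          rw [hEdef]; field_simp
        have h13 : μ * (E + M * x) = μ * E + μ * (M * x) := by ring
        linarith
      exact le_of_mul_le_mul_left (by linarith) hμ0
    · -- `f(t,u)u` not integrable: the second hypothesis gives `N ≤ M x`
      have hIU0 : IU = 0 := hIUdef.trans (integral_undef h2)
      rw [hIU0, sub_zero, abs_of_nonneg hN] at hI'
      have h3 : c₀ * N ≤ 1 * N :=
        mul_le_mul_of_nonneg_right (min_le_right _ _) hN
      linarith
  · -- `F(t,u)` not integrable: the first hypothesis gives `(1/p) N ≤ M`
    have hIF0 : IF = 0 := hIFdef.trans (integral_undef h1)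
    rw [hIF0, sub_zero] at hI
    have h3 : c₀ * N ≤ (1 / p) * N :=
      mul_le_mul_of_nonneg_right (le_trans (min_le_left _ _) (min_le_right _ _)) hN
    linarith
end
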